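/- arXiv:2112.06157 — 2 statements merged into one kernel-verified Lean document; each statement's English description precedes it below -/
import Mathlib

section
/- Suppose e ∈ F_2^n is the unique solution of weight ω to H e = s, and let I ⊆ [n] with |I| = n-k be such that H_I is invertible. If all nonzero coordinates of e lie in I (i.e. the complement of I restricted to e is zero), then the unique solution e_1 of the linear system H_I e_1 = s equals the projection e_I of e onto I, and in particular wt(e_1) = ω. -/
open Finset Function Matrix

section ColumnRestriction

variable {m n p R : Type*} [Fintype n] [Fintype p]

theorem Matrix.submatrix_mulVec_comp_of_support_subset_range [NonUnitalNonAssocSemiring R]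
    (H : Matrix m n R) {ι : p → n} (hι : Injective ι) {e : n → R}
    (hsupp : ∀ j, j ∉ Set.range ι → e j = 0) :
    H.submatrix id ι *ᵥ (e ∘ ι) = H *ᵥ e := by
  funext r
  exact Fintype.sum_of_injective ι hι _ _ (fun j hj => by simp [hsupp j hj]) fun _ => rfl

theorem hammingNorm_comp_of_support_subset_range [Zero R] [DecidableEq R] {ι : p → n}
    (hι : Injective ι) {e : n → R} (hsupp : ∀ j, j ∉ Set.range ι → e j = 0) :
    hammingNorm (e ∘ ι) = hammingNorm e := by
  refine card_nbij ι (fun c hc => by simpa [hammingNorm] using hc) hι.injOn fun j hj => ?_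
  have hej : e j ≠ 0 := by simpa using hj
  obtain ⟨c, rfl⟩ : j ∈ Set.range ι := by_contra fun h => hej (hsupp j h)
  exact ⟨c, by simpa using hej, rfl⟩

end ColumnRestriction

theorem stmt_5_general (n k ω : ℕ)
    (H : Matrix (Fin (n-k)) (Fin n) (ZMod 2)) (s : Fin (n-k) → ZMod 2)
    (e : Fin n → ZMod 2) (he : H.mulVec e = s)
    (hwt : (Finset.univ.filter fun j => e j ≠ 0).card = ω)
    (ι : Fin (n-k) → Fin n) (hι : Function.Injective ι)
    (hinv : IsUnit (Matrix.of fun r c => H r (ι c)))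
    (hsupp : ∀ j : Fin n, (∀ c, ι c ≠ j) → e j = 0) :
    (∀ e1 : Fin (n-k) → ZMod 2,
      (Matrix.of fun r c => H r (ι c)).mulVec e1 = s → e1 = fun c => e (ι c)) ∧
    (Finset.univ.filter fun c => e (ι c) ≠ 0).card = ω := by
  have hsupp_range : ∀ j, j ∉ Set.range ι → e j = 0 := fun j hj =>
    hsupp j fun c hc => hj ⟨c, hc⟩
  have hsolves : H.submatrix id ι *ᵥ (e ∘ ι) = s :=
    (H.submatrix_mulVec_comp_of_support_subset_range hι hsupp_range).trans he
  refine ⟨fun e1 h1 => Matrix.mulVec_injective_iff_isUnit.mpr hinv (h1.trans hsolves.symm), ?_⟩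
  exact (hammingNorm_comp_of_support_subset_range hι hsupp_range).trans hwt

theorem stmt_5 (n k ω : ℕ) (hkn : k ≤ n)
    (H : Matrix (Fin (n-k)) (Fin n) (ZMod 2)) (s : Fin (n-k) → ZMod 2)
    (e : Fin n → ZMod 2) (he : H.mulVec e = s)
    (hwt : (Finset.univ.filter fun j => e j ≠ 0).card = ω)
    (huniq : ∀ e' : Fin n → ZMod 2, H.mulVec e' = s →
      (Finset.univ.filter fun j => e' j ≠ 0).card = ω → e' = e)
    (ι : Fin (n-k) → Fin n) (hι : Function.Injective ι)
    (hinv : IsUnit (Matrix.of fun r c => H r (ι c)))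
    (hsupp : ∀ j : Fin n, (∀ c, ι c ≠ j) → e j = 0) :
    (∀ e1 : Fin (n-k) → ZMod 2,
      (Matrix.of fun r c => H r (ι c)).mulVec e1 = s → e1 = fun c => e (ι c)) ∧
    (Finset.univ.filter fun c => e (ι c) ≠ 0).card = ω :=
  stmt_5_general n k ω H s e he hwt ι hι hinv hsupp
end

section
/- Fix 0 < τ ≤ 1-R < 1 and let q(α) = (1-α)·H(τ/(1-α)) for α ∈ [0, 1-τ). Then q is strictly decreasing in α; consequently the Hybrid-Prange exponent t(δ) = 1 - ( (1-α)H(τ/(1-α)) - (1-R)H(τ/(1-R)) ) / ( 2(H(τ) - (1-R)H(τ/(1-R))) ) with α = (1-δ)R is strictly decreasing in δ and satisfies t(1) = 1/2. -/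
/-!
Writing `u = 1 - α`, the grouping rule of entropy gives
`u · h(τ/u) = h(τ) + h(u - τ) - h(u)` with `h = negMulLog`, and by strict concavity of `h`
the increment `h(u) - h(u - τ)` strictly decreases in `u`. So `u ↦ u · H(τ/u)` is strictly
increasing on `[τ, ∞)`, i.e. `q` is strictly decreasing. Then `t` is an increasing affine image
of `q ∘ (δ ↦ (1 - δ)R)`, whose normalising denominator `2(q 0 - q R)` is positive, and at
`δ = 1` the numerator is half the denominator.
-/

open Real Set

theorem StrictConcaveOn.sub_sub_lt_sub_sub {s : Set ℝ} {f : ℝ → ℝ} (hf : StrictConcaveOn ℝ s f)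
    {h x y : ℝ} (hh : 0 < h) (hxs : x - h ∈ s) (hys : y ∈ s) (hxy : x < y) :
    f y - f (y - h) < f x - f (x - h) := by
  have hmem : ∀ z ∈ Icc (x - h) y, z ∈ s := fun z hz => hf.1.ordConnected.out hxs hys hz
  have hx : x ∈ s := hmem x ⟨by linarith, hxy.le⟩
  have hyh : y - h ∈ s := hmem (y - h) ⟨by linarith, by linarith⟩
  -- both increments are compared with the secant slope of `f` over `[x - h, y]`
  have secant_left := hf.secant_strict_mono hxs hx hys (by linarith) (by linarith) hxy
  have secant_right := hf.secant_strict_mono hys hxs hyh (by linarith) (by linarith)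
    (by linarith : x - h < y - h)
  have slope_symm : (f (x - h) - f y) / (x - h - y) = (f y - f (x - h)) / (y - (x - h)) := by
    rw [← neg_sub (f y), ← neg_sub y, neg_div_neg_eq]
  rw [show y - h - y = -h by ring, div_neg, ← neg_div, neg_sub, slope_symm] at secant_right
  rw [show x - (x - h) = h by ring] at secant_left
  exact (div_lt_div_iff_of_pos_right hh).1 (secant_right.trans secant_left)

theorem Real.mul_binEntropy_div {u : ℝ} (τ : ℝ) (hu : u ≠ 0) :
    u * binEntropy (τ / u) = negMulLog τ + negMulLog (u - τ) - negMulLog u := by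
  have split : ∀ a, negMulLog a = u * negMulLog (a / u) + a / u * negMulLog u := fun a => by
    rw [← negMulLog_mul, div_mul_cancel₀ a hu]
  rw [binEntropy_eq_negMulLog_add_negMulLog_one_sub, split τ, split (u - τ),
    one_sub_div hu]
  field_simp
  ring

theorem Real.strictMonoOn_mul_binEntropy_div {τ : ℝ} (hτ : 0 < τ) :
    StrictMonoOn (fun u => u * binEntropy (τ / u)) (Ici τ) := by
  intro u hu v hv huv
  have hu0 : u ≠ 0 := (hτ.trans_le hu).ne'
  have hv0 : v ≠ 0 := (hτ.trans_le hv).ne'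
  have increment := strictConcaveOn_negMulLog.sub_sub_lt_sub_sub hτ
    (mem_Ici.2 (sub_nonneg.2 hu)) (mem_Ici.2 (hτ.le.trans hv)) huv
  simp only [mul_binEntropy_div τ hu0, mul_binEntropy_div τ hv0]
  linarith

theorem Real.binEntropy_div_log_two (x : ℝ) :
    binEntropy x / log 2 = -(x * logb 2 x) - (1 - x) * logb 2 (1 - x) := by
  simp only [binEntropy_eq_negMulLog_add_negMulLog_one_sub, negMulLog, logb]
  ring

theorem Real.strictAntiOn_one_sub_mul_binEntropy_div {τ : ℝ} (hτ : 0 < τ) :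
    StrictAntiOn (fun α => (1 - α) * binEntropy (τ / (1 - α)) / log 2) (Iic (1 - τ)) := by
  intro a ha b hb hab
  have hmono := strictMonoOn_mul_binEntropy_div hτ
    (mem_Ici.2 (le_sub_comm.1 hb)) (mem_Ici.2 (le_sub_comm.1 ha)) (sub_lt_sub_left hab 1)
  exact div_lt_div_of_pos_right hmono (log_pos one_lt_two)

theorem stmt_11_general (R τ : ℝ) (hR0 : 0 < R) (hτ0 : 0 < τ) (hτ : τ ≤ 1 - R) :
    let H : ℝ → ℝ := fun x => -(x * Real.logb 2 x) - (1-x) * Real.logb 2 (1-x)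
    let q : ℝ → ℝ := fun α => (1-α) * H (τ/(1-α))
    let t : ℝ → ℝ := fun δ =>
      1 - (q ((1-δ)*R) - (1-R) * H (τ/(1-R))) /
        (2 * (H τ - (1-R) * H (τ/(1-R))))
    StrictAntiOn q (Set.Ico 0 (1-τ)) ∧ StrictAntiOn t (Set.Icc 0 1) ∧ t 1 = 1/2 := by
  intro H q t
  have hq_anti : StrictAntiOn q (Iic (1 - τ)) := by
    convert strictAntiOn_one_sub_mul_binEntropy_div hτ0 using 2 with α
    simp only [q, H, ← binEntropy_div_log_two, mul_div_assoc]
  have ht : ∀ δ, t δ = 1 - (q ((1 - δ) * R) - q R) / (2 * (q 0 - q R)) := fun δ => by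
    simp only [t, q, sub_zero, one_mul, div_one]
  have hR : R ∈ Iic (1 - τ) := le_sub_comm.1 hτ
  have hgap : 0 < q 0 - q R := sub_pos.2 (hq_anti (mem_Iic.2 (by linarith)) hR hR0)
  refine ⟨hq_anti.mono (Ico_subset_Iio_self.trans Iio_subset_Iic_self), ?_, ?_⟩
  · intro a ha b hb hab
    have hq_lt : q ((1 - a) * R) < q ((1 - b) * R) := by
      refine hq_anti (mem_Iic.2 ?_) (mem_Iic.2 ?_) ?_ <;> nlinarith [ha.1, hb.1]
    rw [ht, ht]
    gcongr
  · rw [ht, sub_self, zero_mul]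
    field_simp
    norm_num

theorem stmt_11 (R τ : ℝ) (hR0 : 0 < R) (hR1 : R < 1) (hτ0 : 0 < τ) (hτ : τ ≤ 1 - R) :
    let H : ℝ → ℝ := fun x => -(x * Real.logb 2 x) - (1-x) * Real.logb 2 (1-x)
    let q : ℝ → ℝ := fun α => (1-α) * H (τ/(1-α))
    let t : ℝ → ℝ := fun δ =>
      1 - (q ((1-δ)*R) - (1-R) * H (τ/(1-R))) /
        (2 * (H τ - (1-R) * H (τ/(1-R))))
    StrictAntiOn q (Set.Ico 0 (1-τ)) ∧ StrictAntiOn t (Set.Icc 0 1) ∧ t 1 = 1/2 :=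
  stmt_11_general R τ hR0 hτ0 hτ
end
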